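/- Let n ≥ 2 be a natural number, let α ≥ 7 be a real number, and let t be a natural number with t ≥ 4·n·log n. If X is a binomial random variable with t trials and success probability 2/n, then Pr[X < t/(α·n)] ≤ n^(−3). -/

import Mathlib

/-!
Chernoff's method with the tilt `λ = log 2`: by Markov's inequality for `2^(-X)`,
`Pr[X ≤ M] ≤ 2^M · E[2^(-X)] = 2^M (1 - 1/n)^t ≤ exp (M log 2 - t/n)`.
For `M = t/(αn)` with `α ≥ 7` the exponent is at most `-(9/10) t/n`, and `t/n ≥ 4 log n`
makes this at most `-3 log n`.
-/

open scoped ENNReal NNReal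
open Real ProbabilityTheory MeasureTheory

set_option linter.deprecated false

namespace PMF

theorem toReal_binomial_apply (p : ℝ≥0) (h : p ≤ 1) (n : ℕ) (i : Fin (n + 1)) :
    (binomial p h n i).toReal = (p : ℝ) ^ (i : ℕ) * (1 - p) ^ (n - i) * n.choose i := by
  rw [binomial_apply, ← ENNReal.coe_one, ← ENNReal.coe_sub]
  simp only [ENNReal.toReal_mul, ENNReal.toReal_pow, ENNReal.coe_toReal, ENNReal.toReal_natCast,
    NNReal.coe_sub h, NNReal.coe_one, Fin.val_last]

theorem mgf_binomial (p : ℝ≥0) (h : p ≤ 1) (n : ℕ) (s : ℝ) :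
    mgf (fun i : Fin (n + 1) ↦ (i : ℝ)) (binomial p h n).toMeasure s =
      (p * exp s + (1 - p)) ^ n := by
  rw [mgf, integral_eq_sum, add_pow, ← Fin.sum_univ_eq_sum_range]
  refine Finset.sum_congr rfl fun i _ ↦ ?_
  rw [toReal_binomial_apply, smul_eq_mul, mul_pow, ← exp_nat_mul]
  ring_nf

theorem measureReal_binomial_le_le_exp (p : ℝ≥0) (h : p ≤ 1) (n : ℕ) {l : ℝ} (hl : 0 ≤ l)
    (M : ℝ) :
    (binomial p h n).toMeasure.real {i | (i : ℝ) ≤ M} ≤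
      exp (l * M - p * (1 - exp (-l)) * n) := by
  have hbase : 0 ≤ 1 - p * (1 - exp (-l)) := by
    have : (p : ℝ) ≤ 1 := h
    nlinarith [exp_pos (-l), p.coe_nonneg]
  calc _ ≤ exp (-(-l) * M) * mgf (fun i : Fin (n + 1) ↦ (i : ℝ)) (binomial p h n).toMeasure (-l) :=
        measure_le_le_exp_mul_mgf M (by linarith) .of_finite
    _ = exp (l * M) * (1 - p * (1 - exp (-l))) ^ n := by rw [mgf_binomial]; ring_nf
    _ ≤ exp (l * M) * exp (-(p * (1 - exp (-l)))) ^ n := by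
        gcongr
        linarith [add_one_le_exp (-(p * (1 - exp (-l))))]
    _ = _ := by rw [← exp_nat_mul, ← exp_add]; ring_nf

end PMF

theorem log_two_mul_div_sub_div_le {n t α : ℝ} (hn : 1 ≤ n) (hα : 7 ≤ α)
    (ht : 4 * n * log n ≤ t) :
    log 2 * (t / (α * n)) - t / n ≤ -(3 * log n) := by
  have hn0 : 0 < n := by linarith
  have hlogn : 0 ≤ log n := log_nonneg hn
  have hlog2 : log 2 / α ≤ 1 / 10 := by
    rw [div_le_iff₀ (by linarith)]
    linarith [log_two_lt_d9]
  have hlog_le : 4 * log n ≤ t / n := by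
    rw [le_div_iff₀ hn0]
    linarith
  calc log 2 * (t / (α * n)) - t / n = (log 2 / α - 1) * (t / n) := by field_simp
    _ ≤ (1 / 10 - 1) * (t / n) := by gcongr; linarith
    _ ≤ -(3 * log n) := by linarith

/-- Lower tail: if `X ~ Bin(t, 2/n)` with `n ≥ 2`, `α ≥ 7`, `t ≥ 4·n·log n`, then
`Pr[X < t/(α·n)] ≤ n⁻³`. -/
theorem binomial_lower_tail (n t : ℕ) (α : ℝ) (hn : 2 ≤ n) (hα : 7 ≤ α)
    (ht : 4 * (n : ℝ) * Real.log n ≤ t)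
    (hp : (2 : ℝ≥0∞) / n ≤ 1) :
    (PMF.binomial ((2 : ℝ≥0∞) / n).toNNReal
      (by simpa using ENNReal.toNNReal_mono ENNReal.one_ne_top hp) t).toMeasure {k : Fin (t + 1) | (k : ℝ) < t / (α * n)} ≤
      ((n : ℝ≥0∞) ^ 3)⁻¹ := by
  set μ := (PMF.binomial ((2 : ℝ≥0∞) / n).toNNReal
      (by simpa using ENNReal.toNNReal_mono ENNReal.one_ne_top hp) t).toMeasure
  set M : ℝ := t / (α * n)
  have hn1 : (1 : ℝ) ≤ n := by exact_mod_cast one_le_two.trans hn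
  have hp_real : (((2 : ℝ≥0∞) / n).toNNReal : ℝ) = 2 / n := by
    rw [ENNReal.coe_toNNReal_eq_toReal, ENNReal.toReal_div]
    simp
  have hexponent : log 2 * M - 2 / n * (1 - exp (-log 2)) * t = log 2 * M - t / n := by
    rw [exp_neg, exp_log two_pos]
    ring
  calc μ {k | (k : ℝ) < M} ≤ μ {k | (k : ℝ) ≤ M} :=
        measure_mono <| Set.setOf_subset_setOf.2 fun _ ↦ le_of_lt
    _ = ENNReal.ofReal (μ.real {k | (k : ℝ) ≤ M}) := (ofReal_measureReal (measure_ne_top _ _)).symm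
    _ ≤ ENNReal.ofReal (exp (-(3 * log n))) := by
        refine ENNReal.ofReal_le_ofReal <|
          (PMF.measureReal_binomial_le_le_exp _ _ t (log_nonneg one_le_two) M).trans ?_
        rw [hp_real, hexponent, exp_le_exp]
        exact log_two_mul_div_sub_div_le hn1 hα ht
    _ = ((n : ℝ≥0∞) ^ 3)⁻¹ := by
        rw [← Nat.cast_ofNat, ← log_pow, exp_neg, exp_log (by positivity),
          ENNReal.ofReal_inv_of_pos (by positivity)]
        norm_cast
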